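/- arXiv:2602.19905 — 7 statements merged into one kernel-verified Lean document; each statement's English description precedes it below -/
import Mathlib

section
/- Let (Y, ∧) be a meet-semilattice and for each α ∈ Y let B_α be a set equipped with operations +_α, ·_α, -_α, *_α making it a square skew left brace. For every pair α ≥ β let φ_{α,β} : B_α → B_β be a map preserving all four operations, such that φ_{α,α} is the identity for each α, and φ_{β,γ} ∘ φ_{α,β} = φ_{α,γ} whenever α ≥ β ≥ γ. On the disjoint union S = Σ_{α∈Y} B_α define, for a ∈ B_α and b ∈ B_β: a + b = φ_{α,α∧β}(a) +_{α∧β} φ_{β,α∧β}(b), a·b = φ_{α,α∧β}(a) ·_{α∧β} φ_{β,α∧β}(b), -a = -_α a, and a* = a^{*_α}. Then (S, +, ·, -, *) is a dual weak left ⋆-brace. -/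
/-- A dual weak left ⋆-brace: `(S,+,-)` and `(S,·,⋆)` are regular ⋆-semigroups,
and `x·(y+z) = x·y + (-x) + x·z`, `(-x)+x = x·x⋆`, `x+(-x) = x⋆·x` hold. -/
class DWLSB (S : Type*) extends Add S, Mul S, Neg S, Star S where
  add_assoc' : ∀ x y z : S, x + y + z = x + (y + z)
  neg_reg : ∀ x : S, x + -x + x = x
  neg_neg' : ∀ x : S, -(-x) = x
  neg_add' : ∀ x y : S, -(x + y) = -y + -x
  mul_assoc' : ∀ x y z : S, x * y * z = x * (y * z)
  star_reg : ∀ x : S, x * star x * x = x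
  star_star' : ∀ x : S, star (star x) = x
  star_mul' : ∀ x y : S, star (x * y) = star y * star x
  distrib' : ∀ x y z : S, x * (y + z) = x * y + -x + x * z
  neg_add_self' : ∀ x : S, -x + x = x * star x
  add_neg_self' : ∀ x : S, x + -x = star x * x

/-- The set of right distributors of a dual weak left ⋆-brace. -/
def Dr (S : Type*) [DWLSB S] : Set S :=
  {z | ∀ a b : S, (a + b) * z = a * z + -z + b * z}

/-- `r : S×S → S×S` is a set-theoretic solution of the Yang–Baxter equation:
`(r×id)∘(id×r)∘(r×id) = (id×r)∘(r×id)∘(id×r)`. -/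
def IsYBESolution {S : Type*} (r : S × S → S × S) : Prop :=
  (fun p : S × S × S => ((r (p.1, p.2.1)).1, (r (p.1, p.2.1)).2, p.2.2)) ∘
      (fun p : S × S × S => (p.1, r (p.2.1, p.2.2))) ∘
      (fun p : S × S × S => ((r (p.1, p.2.1)).1, (r (p.1, p.2.1)).2, p.2.2)) =
    (fun p : S × S × S => (p.1, r (p.2.1, p.2.2))) ∘
      (fun p : S × S × S => ((r (p.1, p.2.1)).1, (r (p.1, p.2.1)).2, p.2.2)) ∘
      (fun p : S × S × S => (p.1, r (p.2.1, p.2.2)))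

/-- A square skew left brace: a dual weak left ⋆-brace with `x·x⋆ = x·y·y⋆·x⋆`,
i.e. `(S,·,⋆)` is completely simple. -/
class SSLB (S : Type*) extends DWLSB S where
  square : ∀ x y : S, x * star x = x * y * star y * star x

theorem stmt3 {Y : Type*} [SemilatticeInf Y] (B : Y → Type*) [∀ α, SSLB (B α)]
    (φ : ∀ α β : Y, β ≤ α → B α → B β)
    (hadd : ∀ (α β : Y) (h : β ≤ α) (a b : B α), φ α β h (a + b) = φ α β h a + φ α β h b)
    (hmul : ∀ (α β : Y) (h : β ≤ α) (a b : B α), φ α β h (a * b) = φ α β h a * φ α β h b)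
    (hneg : ∀ (α β : Y) (h : β ≤ α) (a : B α), φ α β h (-a) = -(φ α β h a))
    (hstar : ∀ (α β : Y) (h : β ≤ α) (a : B α), φ α β h (star a) = star (φ α β h a))
    (hid : ∀ (α : Y) (h : α ≤ α) (a : B α), φ α α h a = a)
    (hcomp : ∀ (α β γ : Y) (h₁ : β ≤ α) (h₂ : γ ≤ β) (a : B α),
      φ β γ h₂ (φ α β h₁ a) = φ α γ (h₂.trans h₁) a) :
    let S := Σ α : Y, B α
    let add : S → S → S := fun a b =>
      ⟨a.1 ⊓ b.1, φ a.1 (a.1 ⊓ b.1) inf_le_left a.2 + φ b.1 (a.1 ⊓ b.1) inf_le_right b.2⟩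
    let mul : S → S → S := fun a b =>
      ⟨a.1 ⊓ b.1, φ a.1 (a.1 ⊓ b.1) inf_le_left a.2 * φ b.1 (a.1 ⊓ b.1) inf_le_right b.2⟩
    let neg : S → S := fun a => ⟨a.1, -a.2⟩
    let st : S → S := fun a => ⟨a.1, star a.2⟩
    (∀ x y z : S, add (add x y) z = add x (add y z)) ∧
    (∀ x : S, add (add x (neg x)) x = x) ∧
    (∀ x : S, neg (neg x) = x) ∧
    (∀ x y : S, neg (add x y) = add (neg y) (neg x)) ∧
    (∀ x y z : S, mul (mul x y) z = mul x (mul y z)) ∧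
    (∀ x : S, mul (mul x (st x)) x = x) ∧
    (∀ x : S, st (st x) = x) ∧
    (∀ x y : S, st (mul x y) = mul (st y) (st x)) ∧
    (∀ x y z : S, mul x (add y z) = add (add (mul x y) (neg x)) (mul x z)) ∧
    (∀ x : S, add (neg x) x = mul x (st x)) ∧
    (∀ x : S, add x (neg x) = mul (st x) x) := by
  intro S add mul neg st
  have mkeq : ∀ (α β : Y) (h : α = β) (a : B α),
      (⟨α, a⟩ : S) = ⟨β, φ α β h.ge a⟩ := by
    intro α β h a
    subst h
    rw [hid]
  refine ⟨?_, ?_, ?_, ?_, ?_, ?_, ?_, ?_, ?_, ?_, ?_⟩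
  · rintro ⟨α, a⟩ ⟨β, b⟩ ⟨γ, c⟩
    refine (mkeq _ _ (inf_assoc α β γ) _).trans (congrArg (Sigma.mk _) ?_)
    simp [add, mul, neg, st, hadd, hcomp, DWLSB.add_assoc']
  · rintro ⟨α, a⟩
    refine (mkeq _ _ (by simp : α ⊓ α ⊓ α = α) _).trans (congrArg (Sigma.mk _) ?_)
    simp [add, mul, neg, st, hadd, hneg, hcomp, hid, DWLSB.neg_reg]
  · rintro ⟨α, a⟩
    exact congrArg (Sigma.mk _) (DWLSB.neg_neg' a)
  · rintro ⟨α, a⟩ ⟨β, b⟩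
    refine (mkeq _ _ (inf_comm α β) _).trans (congrArg (Sigma.mk _) ?_)
    simp [add, mul, neg, st, hadd, hneg, hcomp, DWLSB.neg_add']
  · rintro ⟨α, a⟩ ⟨β, b⟩ ⟨γ, c⟩
    refine (mkeq _ _ (inf_assoc α β γ) _).trans (congrArg (Sigma.mk _) ?_)
    simp [add, mul, neg, st, hmul, hcomp, DWLSB.mul_assoc']
  · rintro ⟨α, a⟩
    refine (mkeq _ _ (by simp : α ⊓ α ⊓ α = α) _).trans (congrArg (Sigma.mk _) ?_)
    simp [add, mul, neg, st, hmul, hstar, hcomp, hid, DWLSB.star_reg]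
  · rintro ⟨α, a⟩
    exact congrArg (Sigma.mk _) (DWLSB.star_star' a)
  · rintro ⟨α, a⟩ ⟨β, b⟩
    refine (mkeq _ _ (inf_comm α β) _).trans (congrArg (Sigma.mk _) ?_)
    simp [add, mul, neg, st, hmul, hstar, hcomp, DWLSB.star_mul']
  · rintro ⟨α, a⟩ ⟨β, b⟩ ⟨γ, c⟩
    have h : α ⊓ (β ⊓ γ) = α ⊓ β ⊓ α ⊓ (α ⊓ γ) := by
      apply le_antisymm
      · exact le_inf (le_inf (le_inf inf_le_left (inf_le_of_right_le inf_le_left))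
          inf_le_left) (le_inf inf_le_left (inf_le_of_right_le inf_le_right))
      · exact le_inf (inf_le_of_left_le inf_le_right)
          (le_inf (inf_le_of_left_le (inf_le_of_left_le inf_le_right))
            (inf_le_of_right_le inf_le_right))
    refine (mkeq _ _ h _).trans (congrArg (Sigma.mk _) ?_)
    simp [add, mul, neg, st, hmul, hadd, hneg, hcomp, DWLSB.distrib']
  · rintro ⟨α, a⟩
    refine congrArg (Sigma.mk _) ?_
    simp [add, mul, neg, st, hneg, hstar, DWLSB.neg_add_self']
  · rintro ⟨α, a⟩
    refine congrArg (Sigma.mk _) ?_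
    simp [add, mul, neg, st, hneg, hstar, DWLSB.add_neg_self']
end

section
/- Let I be a nonempty set and (G,+,·) a skew left brace. On S = I×G×I define (i,g,j)·(k,h,l) = (i, g·h, l), (i,g,j)* = (j, g⁻¹, i), (i,g,j)+(k,h,l) = (k, g+h, j), and -(i,g,j) = (j, -g, i), where g⁻¹ is the multiplicative inverse and -g the additive inverse in G. Then (S,+,·,-,*) is a square skew left brace: (S,+,-) and (S,·,*) are regular ⋆-semigroups, x·(y+z) = x·y + (-x) + x·z, (-x) + x = x·x*, x + (-x) = x*·x, and x·x* = x·y·y*·x* for all x,y,z ∈ S. -/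
/-!
Applying the brace law to `1 * (0 + 0)` gives `0 = 0 + -1 + 0`, so the additive and multiplicative
identities of a skew left brace coincide. Hence `(-x) + x = (x₁, 0, x₁)` and `x * x* = (x₁, 1, x₁)`
are the same element, and likewise for `x + (-x)` and `x* * x`. Every other axiom holds
coordinatewise: the middle coordinate is an identity in `G`, and the outer coordinates are only
carried along.
-/

theorem zero_eq_one_of_brace {G : Type*} [AddGroup G] [Group G]
    (hG : ∀ x y z : G, x * (y + z) = x * y + -x + x * z) : (0 : G) = 1 := by
  have h := hG 1 0 0
  rw [add_zero, one_mul, add_zero, zero_add, eq_comm, neg_eq_zero] at h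
  exact h.symm

namespace RectangularBrace

variable {I G : Type*}

def mul [Mul G] (a b : I × G × I) : I × G × I := (a.1, a.2.1 * b.2.1, b.2.2)

def star [Inv G] (a : I × G × I) : I × G × I := (a.2.2, a.2.1⁻¹, a.1)

def add [Add G] (a b : I × G × I) : I × G × I := (b.1, a.2.1 + b.2.1, a.2.2)

def neg [Neg G] (a : I × G × I) : I × G × I := (a.2.2, -a.2.1, a.1)

theorem mul_assoc [Semigroup G] (x y z : I × G × I) : mul (mul x y) z = mul x (mul y z) := by
  simp [mul, _root_.mul_assoc]

theorem mul_star_mul [Group G] (x : I × G × I) : mul (mul x (star x)) x = x := by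
  simp [mul, star]

theorem star_star [InvolutiveInv G] (x : I × G × I) : star (star x) = x := by
  simp [star]

theorem star_mul [DivisionMonoid G] (x y : I × G × I) : star (mul x y) = mul (star y) (star x) := by
  simp [mul, star]

theorem add_assoc [AddSemigroup G] (x y z : I × G × I) : add (add x y) z = add x (add y z) := by
  simp [add, _root_.add_assoc]

theorem add_neg_add [AddGroup G] (x : I × G × I) : add (add x (neg x)) x = x := by
  simp [add, neg]

theorem neg_neg [InvolutiveNeg G] (x : I × G × I) : neg (neg x) = x := by
  simp [neg]

theorem neg_add [SubtractionMonoid G] (x y : I × G × I) : neg (add x y) = add (neg y) (neg x) := by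
  simp [add, neg]

theorem mul_add [Add G] [Neg G] [Mul G] (hG : ∀ x y z : G, x * (y + z) = x * y + -x + x * z)
    (x y z : I × G × I) : mul x (add y z) = add (add (mul x y) (neg x)) (mul x z) := by
  simp [mul, add, neg, hG]

theorem neg_add_self [AddGroup G] [Group G] (h01 : (0 : G) = 1) (x : I × G × I) :
    add (neg x) x = mul x (star x) := by
  simp [add, neg, mul, star, h01]

theorem add_neg_self [AddGroup G] [Group G] (h01 : (0 : G) = 1) (x : I × G × I) :
    add x (neg x) = mul (star x) x := by
  simp [add, neg, mul, star, h01]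

theorem mul_star_eq_mul_mul_star_mul_star [Group G] (x y : I × G × I) :
    mul x (star x) = mul (mul (mul x y) (star y)) (star x) := by
  simp [mul, star]

end RectangularBrace

theorem stmt4_general {I G : Type*} [AddGroup G] [Group G]
    (hG : ∀ x y z : G, x * (y + z) = x * y + -x + x * z) :
    let S := I × G × I
    let mul : S → S → S := fun a b => (a.1, a.2.1 * b.2.1, b.2.2)
    let st : S → S := fun a => (a.2.2, a.2.1⁻¹, a.1)
    let add : S → S → S := fun a b => (b.1, a.2.1 + b.2.1, a.2.2)
    let neg : S → S := fun a => (a.2.2, -a.2.1, a.1)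
    (∀ x y z : S, add (add x y) z = add x (add y z)) ∧
    (∀ x : S, add (add x (neg x)) x = x) ∧
    (∀ x : S, neg (neg x) = x) ∧
    (∀ x y : S, neg (add x y) = add (neg y) (neg x)) ∧
    (∀ x y z : S, mul (mul x y) z = mul x (mul y z)) ∧
    (∀ x : S, mul (mul x (st x)) x = x) ∧
    (∀ x : S, st (st x) = x) ∧
    (∀ x y : S, st (mul x y) = mul (st y) (st x)) ∧
    (∀ x y z : S, mul x (add y z) = add (add (mul x y) (neg x)) (mul x z)) ∧
    (∀ x : S, add (neg x) x = mul x (st x)) ∧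
    (∀ x : S, add x (neg x) = mul (st x) x) ∧
    (∀ x y : S, mul x (st x) = mul (mul (mul x y) (st y)) (st x)) := by
  have h01 := zero_eq_one_of_brace hG
  exact ⟨RectangularBrace.add_assoc, RectangularBrace.add_neg_add, RectangularBrace.neg_neg,
    RectangularBrace.neg_add, RectangularBrace.mul_assoc, RectangularBrace.mul_star_mul,
    RectangularBrace.star_star, RectangularBrace.star_mul, RectangularBrace.mul_add hG,
    RectangularBrace.neg_add_self h01, RectangularBrace.add_neg_self h01,
    RectangularBrace.mul_star_eq_mul_mul_star_mul_star⟩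

theorem stmt4 {I G : Type*} [Nonempty I] [AddGroup G] [Group G]
    (hG : ∀ x y z : G, x * (y + z) = x * y + -x + x * z) :
    let S := I × G × I
    let mul : S → S → S := fun a b => (a.1, a.2.1 * b.2.1, b.2.2)
    let st : S → S := fun a => (a.2.2, a.2.1⁻¹, a.1)
    let add : S → S → S := fun a b => (b.1, a.2.1 + b.2.1, a.2.2)
    let neg : S → S := fun a => (a.2.2, -a.2.1, a.1)
    (∀ x y z : S, add (add x y) z = add x (add y z)) ∧
    (∀ x : S, add (add x (neg x)) x = x) ∧
    (∀ x : S, neg (neg x) = x) ∧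
    (∀ x y : S, neg (add x y) = add (neg y) (neg x)) ∧
    (∀ x y z : S, mul (mul x y) z = mul x (mul y z)) ∧
    (∀ x : S, mul (mul x (st x)) x = x) ∧
    (∀ x : S, st (st x) = x) ∧
    (∀ x y : S, st (mul x y) = mul (st y) (st x)) ∧
    (∀ x y z : S, mul x (add y z) = add (add (mul x y) (neg x)) (mul x z)) ∧
    (∀ x : S, add (neg x) x = mul x (st x)) ∧
    (∀ x : S, add x (neg x) = mul (st x) x) ∧
    (∀ x y : S, mul x (st x) = mul (mul (mul x y) (st y)) (st x)) :=
  stmt4_general hG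
end

section
/- Let S be a square skew left brace, let P be its set of projections, fix e ∈ P, and let H = {h ∈ S | h·h* = e and h*·h = e}. Then the map ψ : P×H×P → S, (i,g,j) ↦ i·g·j, is a bijection, and for all i,j,k,l ∈ P and g,h ∈ H: (i·g·j)·(k·h·l) = i·(g·h)·l; (i·g·j)* = j·g*·i; (i·g·j) + (k·h·l) = k·(g+h)·j; and -(i·g·j) = j·(-g)·i. -/
/-!
The square axiom gives `e·f·e = e` for all projections `e, f`, so `(S,·)` is completely simple:
`x = (x·x⋆)·(e·x·e)·(x⋆·x)` with `e·x·e ∈ H`, the triple `(i, g, j)` is recovered from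
`x = i·g·j` as `(x·x⋆, e·x·e, x⋆·x)`, and `g·j·k·h = g·(e·j·k·e)·h = g·h`.
On the additive side, distributivity makes every projection `e` satisfy `y + e = e·y` and
`e + y = y·e` for all `y`. Hence `i·g·j = j + g + i`, and sums and negatives of such elements
reduce to sums and negatives in `H`.
-/

namespace DWLSB

variable {S : Type*} [DWLSB S]

instance : Semigroup S where
  mul_assoc := mul_assoc'

instance : AddSemigroup S where
  add_assoc := add_assoc'

instance : InvolutiveNeg S where
  neg_neg := neg_neg'

instance : StarMul S where
  star_involutive := star_star'
  star_mul := star_mul'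

theorem mul_star_mul_self (x : S) : x * (star x * x) = x := by
  rw [← mul_assoc, star_reg]

theorem isStarProjection_mul_star_self (x : S) : IsStarProjection (x * star x) where
  isIdempotentElem := by rw [IsIdempotentElem, ← mul_assoc, star_reg]
  isSelfAdjoint := IsSelfAdjoint.mul_star_self x

theorem isStarProjection_star_mul_self (x : S) : IsStarProjection (star x * x) := by
  simpa only [star_star] using isStarProjection_mul_star_self (star x)

theorem add_mul_star_self (x : S) : x + x * star x = x := by
  rw [← neg_add_self', ← add_assoc, neg_reg]

theorem star_mul_self_add (x : S) : star x * x + x = x := by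
  rw [← add_neg_self', neg_reg]

end DWLSB

open DWLSB

namespace IsStarProjection

section DualWeakLeftStarBrace

variable {S : Type*} [DWLSB S] {e : S}

theorem neg_eq_self (he : IsStarProjection e) : -e = e := by
  have h : -e + e = e := by
    rw [neg_add_self', he.isSelfAdjoint.star_eq, he.isIdempotentElem.eq]
  calc -e = -(-e + e) := by rw [h]
    _ = e := by rw [DWLSB.neg_add', neg_neg, h]

theorem add_self (he : IsStarProjection e) : e + e = e := by
  simpa only [he.neg_eq_self, he.isSelfAdjoint.star_eq, he.isIdempotentElem.eq] using
    add_neg_self' e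

theorem mul_add_eq (he : IsStarProjection e) (y z : S) : e * (y + z) = e * y + e + e * z := by
  rw [distrib', he.neg_eq_self]

end DualWeakLeftStarBrace

variable {S : Type*} [SSLB S] {e f i j k l : S}

theorem mul_mul_self_eq (he : IsStarProjection e) (hf : IsStarProjection f) : e * f * e = e := by
  have h := SSLB.square e f
  rw [he.isSelfAdjoint.star_eq, hf.isSelfAdjoint.star_eq, he.isIdempotentElem.eq,
    mul_assoc e f f, hf.isIdempotentElem.eq] at h
  exact h.symm

theorem mul_mul_star (he : IsStarProjection e) (x : S) : x * e * star x = x * star x := by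
  have h := SSLB.square x e
  rw [he.isSelfAdjoint.star_eq, mul_assoc x e e, he.isIdempotentElem.eq] at h
  exact h.symm

theorem mul_left_mul_star_self (he : IsStarProjection e) (x : S) : e * x * star (e * x) = e := by
  rw [star_mul, he.isSelfAdjoint.star_eq, ← mul_assoc, mul_assoc e x,
    he.mul_mul_self_eq (isStarProjection_mul_star_self x)]

theorem star_mul_right_mul_self (he : IsStarProjection e) (x : S) :
    star (x * e) * (x * e) = e := by
  simpa only [star_mul, star_star, he.isSelfAdjoint.star_eq, mul_assoc] using
    he.mul_left_mul_star_self (star x)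

theorem mul_right_mul_star_self (he : IsStarProjection e) (x : S) :
    x * e * star (x * e) = x * star x := by
  rw [star_mul, he.isSelfAdjoint.star_eq, ← mul_assoc, mul_assoc x e e, he.isIdempotentElem.eq,
    he.mul_mul_star]

theorem neg_add_mul (he : IsStarProjection e) (w : S) : -w + w * e = w * star w := by
  have hwe : w * e = w * e + -w + w * e := by
    simpa only [he.add_self] using distrib' w e e
  have hwe' : -(w * e) + w * e = w * star w := by
    rw [neg_add_self', he.mul_right_mul_star_self]
  have hw : -w + w + -w = -w := by
    simpa only [neg_neg] using neg_reg (-w)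
  calc -w + w * e = -w + w + -w + w * e := by rw [hw]
    _ = -(w * e) + w * e + -w + w * e := by rw [neg_add_self', hwe']
    _ = -(w * e) + w * e := by rw [add_assoc (-(w * e)), add_assoc (-(w * e)), ← hwe]
    _ = w * star w := hwe'

theorem star_mul_self_add_mul (he : IsStarProjection e) (w : S) : star w * w + w * e = w := by
  rw [← add_neg_self', add_assoc, he.neg_add_mul, add_mul_star_self]

theorem add_mul_eq_self (he : IsStarProjection e) (hf : IsStarProjection f) : e + e * f = e := by
  simpa only [he.isSelfAdjoint.star_eq, he.isIdempotentElem.eq] using hf.star_mul_self_add_mul e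

theorem add_add_eq_self (he : IsStarProjection e) (hf : IsStarProjection f) : e + f + e = e := by
  have hsum : (f + e) * star (f + e) = e + f + e := by
    rw [← neg_add_self', DWLSB.neg_add', he.neg_eq_self, hf.neg_eq_self, ← add_assoc,
      add_assoc e f f, hf.add_self]
  have hq : IsStarProjection (e + f + e) := hsum ▸ isStarProjection_mul_star_self (f + e)
  have heq : e * (e + f + e) = e := by
    simp only [he.mul_add_eq, he.isIdempotentElem.eq, he.add_self, he.add_mul_eq_self hf]
  have hqe : (e + f + e) * e = e := by
    simpa only [star_mul, hq.isSelfAdjoint.star_eq, he.isSelfAdjoint.star_eq] using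
      congrArg star heq
  calc e + f + e = (e + f + e) * e * (e + f + e) := (hq.mul_mul_self_eq he).symm
    _ = e := by rw [hqe, heq]

theorem add_eq_mul_left (he : IsStarProjection e) (y : S) : y + e = e * y := by
  have hz : (y + e) * star (y + e) = e := by
    rw [← neg_add_self', DWLSB.neg_add', he.neg_eq_self, ← add_assoc, add_assoc e, neg_add_self',
      he.add_add_eq_self (isStarProjection_mul_star_self y)]
  have hez : e * (y + e) = y + e := by
    simpa only [hz] using star_reg (y + e)
  have hey : e * y + e = e * y := by
    simpa only [he.mul_left_mul_star_self] using add_mul_star_self (e * y)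
  calc y + e = e * (y + e) := hez.symm
    _ = e * y := by rw [he.mul_add_eq, he.isIdempotentElem.eq, add_assoc, he.add_self, hey]

theorem add_mul_eq (he : IsStarProjection e) (y : S) : e + y * e = y * e := by
  simpa only [he.star_mul_right_mul_self] using star_mul_self_add (y * e)

theorem add_eq_mul_right (he : IsStarProjection e) (u : S) : e + u = u * e := by
  calc e + u = e + (star u * u + (e + u * e)) := by rw [he.add_mul_eq, he.star_mul_self_add_mul]
    _ = e + star u * u + e + u * e := by simp only [add_assoc]
    _ = u * e := by rw [he.add_add_eq_self (isStarProjection_star_mul_self u), he.add_mul_eq]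

theorem mul_mul_mul_eq_self (he : IsStarProjection e) (hj : IsStarProjection j)
    (hk : IsStarProjection k) : e * j * k * e = e := by
  calc e * j * k * e = j * (k * e) + e := by
        rw [he.add_eq_mul_left]
        simp only [mul_assoc]
    _ = e + (j + j + j * k) + e := by
        rw [← he.add_eq_mul_right k, hj.mul_add_eq, ← he.add_eq_mul_right j]
        simp only [add_assoc]
    _ = e := by rw [hj.add_self, hj.add_mul_eq_self hk, he.add_add_eq_self hj]

theorem add_add_add_eq_self (he : IsStarProjection e) (hi : IsStarProjection i)
    (hl : IsStarProjection l) : e + (i + l) + e = e := by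
  rw [hl.add_eq_mul_left i, he.add_eq_mul_right, he.add_eq_mul_left, ← mul_assoc, ← mul_assoc,
    he.mul_mul_mul_eq_self hl hi]

theorem triple_eq_self (he : IsStarProjection e) (x : S) :
    x * star x * (e * x * e) * (star x * x) = x := by
  have hx : x * star x * (e * x) = x := by
    calc x * star x * (e * x) = x * star x * e * (x * star x) * x := by
          simp only [mul_assoc, mul_star_mul_self]
      _ = x := by rw [(isStarProjection_mul_star_self x).mul_mul_self_eq he, star_reg]
  calc x * star x * (e * x * e) * (star x * x) = x * e * star x * x := by
        rw [← mul_assoc (x * star x) (e * x) e, hx]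
        simp only [mul_assoc]
    _ = x := by rw [he.mul_mul_star, star_reg]

theorem triple_eq_add (hi : IsStarProjection i) (hj : IsStarProjection j) (g : S) :
    i * g * j = j + (g + i) := by
  rw [← hj.add_eq_mul_right (i * g), ← hi.add_eq_mul_left g]

theorem neg_triple (hi : IsStarProjection i) (hj : IsStarProjection j) (g : S) :
    -(i * g * j) = j * -g * i := by
  rw [triple_eq_add hi hj, DWLSB.neg_add', DWLSB.neg_add', hi.neg_eq_self, hj.neg_eq_self,
    hi.add_eq_mul_right, hj.add_eq_mul_left, mul_assoc]

variable {g h : S}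

theorem mul_triple_mul (he : IsStarProjection e) (hi : IsStarProjection i)
    (hj : IsStarProjection j) (hg : g * star g = e) (hg' : star g * g = e) :
    e * (i * g * j) * e = g := by
  have hge : g * e = g := hg' ▸ mul_star_mul_self g
  have heg : e * g = g := hg ▸ star_reg g
  calc e * (i * g * j) * e = e * i * (e * g * e) * j * e := by
        rw [heg, hge]
        simp only [mul_assoc]
    _ = e * i * e * g * (e * j * e) := by simp only [mul_assoc]
    _ = g := by rw [he.mul_mul_self_eq hi, he.mul_mul_self_eq hj, heg, hge]

theorem triple_mul_triple (he : IsStarProjection e) (hj : IsStarProjection j)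
    (hk : IsStarProjection k) (hg : star g * g = e) (hh : h * star h = e) (i l : S) :
    i * g * j * (k * h * l) = i * (g * h) * l := by
  have hge : g * e = g := hg ▸ mul_star_mul_self g
  have heh : e * h = h := hh ▸ star_reg h
  calc i * g * j * (k * h * l) = i * (g * e * j * k * (e * h)) * l := by
        rw [hge, heh]
        simp only [mul_assoc]
    _ = i * (g * (e * j * k * e) * h) * l := by simp only [mul_assoc]
    _ = i * (g * h) * l := by rw [he.mul_mul_mul_eq_self hj hk, hge]

theorem triple_add_triple (he : IsStarProjection e) (hi : IsStarProjection i)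
    (hj : IsStarProjection j) (hk : IsStarProjection k) (hl : IsStarProjection l)
    (hg : g * star g = e) (hh : star h * h = e) :
    i * g * j + k * h * l = k * (g + h) * j := by
  have hge : g + e = g := hg ▸ add_mul_star_self g
  have heh : e + h = h := hh ▸ star_mul_self_add h
  calc i * g * j + k * h * l = j + (g + e + (i + l) + (e + h)) + k := by
        rw [triple_eq_add hi hj g, triple_eq_add hk hl h, hge, heh]
        simp only [add_assoc]
    _ = j + (g + (e + (i + l) + e) + h) + k := by simp only [add_assoc]
    _ = k * (g + h) * j := by
        rw [he.add_add_add_eq_self hi hl, hge, add_assoc j, hk.add_eq_mul_left (g + h),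
          hj.add_eq_mul_right]

end IsStarProjection

theorem IsSelfAdjoint.star_triple {R : Type*} [Semigroup R] [StarMul R] {i j : R}
    (hi : IsSelfAdjoint i) (hj : IsSelfAdjoint j) (g : R) : star (i * g * j) = j * star g * i := by
  rw [star_mul, star_mul, hi.star_eq, hj.star_eq, mul_assoc]

theorem stmt5 {S : Type*} [SSLB S] (e : S) (he : e * e = e ∧ star e = e) :
    Function.Bijective
      (fun x : {p : S // p * p = p ∧ star p = p} ×
          {h : S // h * star h = e ∧ star h * h = e} ×
          {p : S // p * p = p ∧ star p = p} =>
        (x.1 : S) * (x.2.1 : S) * (x.2.2 : S)) ∧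
    (∀ i j k l g h : S,
      i * i = i → star i = i → j * j = j → star j = j →
      k * k = k → star k = k → l * l = l → star l = l →
      g * star g = e → star g * g = e → h * star h = e → star h * h = e →
      (i * g * j) * (k * h * l) = i * (g * h) * l ∧
      star (i * g * j) = j * star g * i ∧
      (i * g * j) + (k * h * l) = k * (g + h) * j ∧
      -(i * g * j) = j * (-g) * i) := by
  have he : IsStarProjection e := isStarProjection_iff'.mpr he
  refine ⟨Function.bijective_iff_has_inverse.mpr ⟨fun x =>
      (⟨x * star x, isStarProjection_iff'.mp (isStarProjection_mul_star_self x)⟩,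
        ⟨e * x * e, (he.mul_right_mul_star_self (e * x)).trans (he.mul_left_mul_star_self x),
          he.star_mul_right_mul_self (e * x)⟩,
        ⟨star x * x, isStarProjection_iff'.mp (isStarProjection_star_mul_self x)⟩), ?_, ?_⟩, ?_⟩
  · rintro ⟨⟨i, hi⟩, ⟨g, hg, hg'⟩, ⟨j, hj⟩⟩
    rw [← isStarProjection_iff'] at hi hj
    refine Prod.ext (Subtype.ext ?_) (Prod.ext (Subtype.ext ?_) (Subtype.ext ?_))
    · simpa only [mul_assoc] using hi.mul_left_mul_star_self (g * j)
    · exact he.mul_triple_mul hi hj hg hg'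
    · exact hj.star_mul_right_mul_self (i * g)
  · exact he.triple_eq_self
  · intro i j k l g h hi hi' hj hj' hk hk' hl hl' hg hg' hh hh'
    have hi : IsStarProjection i := ⟨hi, hi'⟩
    have hj : IsStarProjection j := ⟨hj, hj'⟩
    have hk : IsStarProjection k := ⟨hk, hk'⟩
    have hl : IsStarProjection l := ⟨hl, hl'⟩
    exact ⟨he.triple_mul_triple hj hk hg' hh i l, hi.isSelfAdjoint.star_triple hj.isSelfAdjoint g,
      he.triple_add_triple hi hj hk hl hg hh', hi.neg_triple hj g⟩
end

section
/- Let I be a nonempty set, (G,+,·) a skew left brace, and S = I×G×I the square skew left brace with operations (i,g,j)·(k,h,l) = (i, g·h, l), (i,g,j)* = (j, g⁻¹, i), (i,g,j)+(k,h,l) = (k, g+h, j), -(i,g,j) = (j, -g, i). For z = (u,t,v) ∈ S, one has z ∈ D_r(S) if and only if t ∈ D_r(G), where D_r(G) = {t ∈ G | (x+y)·t = x·t + (-(t)) + y·t for all x,y ∈ G}. -/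
theorem stmt7_general {I G : Type*} [AddGroup G] [Group G]
    (u v : I) (t : G) :
    let S := I × G × I
    let mul : S → S → S := fun a b => (a.1, a.2.1 * b.2.1, b.2.2)
    let add : S → S → S := fun a b => (b.1, a.2.1 + b.2.1, a.2.2)
    let neg : S → S := fun a => (a.2.2, -a.2.1, a.1)
    let z : S := (u, t, v)
    (∀ a b : S, mul (add a b) z = add (add (mul a z) (neg z)) (mul b z)) ↔
      (∀ x y : G, (x + y) * t = x * t + -t + y * t) := by
  intro S mul add neg z
  constructor
  · intro hS x y
    exact congrArg (fun s : S => s.2.1) (hS (u, x, v) (u, y, v))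
  · intro hG a b
    exact Prod.ext rfl (Prod.ext (hG a.2.1 b.2.1) rfl)

theorem stmt7 {I G : Type*} [Nonempty I] [AddGroup G] [Group G]
    (hG : ∀ x y z : G, x * (y + z) = x * y + -x + x * z)
    (u v : I) (t : G) :
    let S := I × G × I
    let mul : S → S → S := fun a b => (a.1, a.2.1 * b.2.1, b.2.2)
    let add : S → S → S := fun a b => (b.1, a.2.1 + b.2.1, a.2.2)
    let neg : S → S := fun a => (a.2.2, -a.2.1, a.1)
    let z : S := (u, t, v)
    (∀ a b : S, mul (add a b) z = add (add (mul a z) (neg z)) (mul b z)) ↔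
      (∀ x y : G, (x + y) * t = x * t + -t + y * t) :=
  stmt7_general u v t
end

section
/- Let (S,·,*) be a regular ⋆-semigroup that is orthodox (the product of any two idempotents of (S,·) is idempotent) and completely simple, the latter being equivalent to the identity x·x* = x·y·y*·x* for all x,y ∈ S. Then for all a,b ∈ S and all projections f,g of S: a·f·g·b = a·b, and f·g·f = f. -/
/-- A regular ⋆-semigroup. -/
class RegStarSemigroup (S : Type*) extends Mul S, Star S where
  mul_assoc' : ∀ x y z : S, x * y * z = x * (y * z)
  star_reg : ∀ x : S, x * star x * x = x
  star_star' : ∀ x : S, star (star x) = x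
  star_mul' : ∀ x y : S, star (x * y) = star y * star x

/-!
Write `p = a⋆a` and `q = bb⋆`, so that `a = ap` and `b = qb`; it suffices to show
`p(fg)q = pq`. By orthodoxy `w = p(fg)q` is idempotent, hence so is `w⋆`, and therefore
`w = ww⋆w = (ww⋆)(w⋆w)`. The identity `xx⋆ = xyy⋆x⋆` collapses both factors:
`ww⋆ = p(fgq)(fgq)⋆p = p` and `w⋆w = q(gfp)(gfp)⋆q = q`. So `w = pq`.
The same identity with `x = f`, `y = g` gives `fgf = f`.
-/

namespace RegStarSemigroup

variable {S : Type*} [RegStarSemigroup S]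

instance : Semigroup S where
  mul_assoc := mul_assoc'

instance : StarMul S where
  star_involutive := star_star'
  star_mul := star_mul'

theorem isStarProjection_star_mul_self (x : S) : IsStarProjection (star x * x) where
  isIdempotentElem := by rw [IsIdempotentElem, mul_assoc, ← mul_assoc x, star_reg]
  isSelfAdjoint := .star_mul_self x

theorem isStarProjection_mul_star_self (x : S) : IsStarProjection (x * star x) := by
  simpa only [star_star] using isStarProjection_star_mul_self (star x)

theorem _root_.IsIdempotentElem.mul_star_mul_star_mul_self {w : S} (hw : IsIdempotentElem w) :
    w * star w * (star w * w) = w := by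
  rw [mul_assoc, ← mul_assoc (star w), hw.star.eq, ← mul_assoc, star_reg]

section CompletelySimple

variable (cs : ∀ x y : S, x * star x = x * y * star y * star x)
include cs

theorem _root_.IsStarProjection.mul_mul_star_mul_self {p : S} (hp : IsStarProjection p) (y : S) :
    p * y * star y * p = p := by
  have h := cs p y
  rwa [hp.isSelfAdjoint.star_eq, hp.isIdempotentElem.eq, eq_comm] at h

theorem _root_.IsStarProjection.mul_mul_self {f g : S} (hf : IsStarProjection f)
    (hg : IsStarProjection g) : f * g * f = f := by
  simpa only [hg.isSelfAdjoint.star_eq, mul_assoc, hg.isIdempotentElem.eq] using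
    hf.mul_mul_star_mul_self cs g

theorem _root_.IsStarProjection.mul_mul_eq_mul_of_isIdempotentElem {p q : S}
    (hp : IsStarProjection p) (hq : IsStarProjection q) (y : S) (hw : IsIdempotentElem (p * y * q)) :
    p * y * q = p * q := by
  have hp' := hp.isSelfAdjoint.star_eq
  have hq' := hq.isSelfAdjoint.star_eq
  have left : p * y * q * star (p * y * q) = p := by
    simpa only [star_mul, hp', mul_assoc] using hp.mul_mul_star_mul_self cs (y * q)
  have right : star (p * y * q) * (p * y * q) = q := by
    simpa only [star_mul, star_star, hp', hq', mul_assoc, hp.isIdempotentElem.eq] using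
      hq.mul_mul_star_mul_self cs (star y * p)
  rw [← hw.mul_star_mul_star_mul_self, left, right]

end CompletelySimple

end RegStarSemigroup

theorem stmt13 {S : Type*} [RegStarSemigroup S]
    (orth : ∀ e f : S, e * e = e → f * f = f → (e * f) * (e * f) = e * f)
    (cs : ∀ x y : S, x * star x = x * y * star y * star x) :
    ∀ a b f g : S, f * f = f → star f = f → g * g = g → star g = g →
      a * f * g * b = a * b ∧ f * g * f = f := by
  intro a b f g hf hfs hg hgs
  have hf' : IsStarProjection f := ⟨hf, hfs⟩
  have hg' : IsStarProjection g := ⟨hg, hgs⟩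
  refine ⟨?_, hf'.mul_mul_self cs hg'⟩
  have hp := RegStarSemigroup.isStarProjection_star_mul_self a
  have hq := RegStarSemigroup.isStarProjection_mul_star_self b
  have hw : IsIdempotentElem (star a * a * (f * g) * (b * star b)) :=
    orth _ _ (orth _ _ hp.isIdempotentElem (orth f g hf hg)) hq.isIdempotentElem
  calc a * f * g * b = a * star a * a * (f * g) * (b * star b * b) := by
        rw [RegStarSemigroup.star_reg, RegStarSemigroup.star_reg, mul_assoc a f g]
    _ = a * (star a * a * (f * g) * (b * star b)) * b := by simp only [mul_assoc]
    _ = a * (star a * a * (b * star b)) * b := by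
        rw [hp.mul_mul_eq_mul_of_isIdempotentElem cs hq _ hw]
    _ = a * star a * a * (b * star b * b) := by simp only [mul_assoc]
    _ = a * b := by rw [RegStarSemigroup.star_reg, RegStarSemigroup.star_reg]
end

section
/- Let S be a square skew left brace, fix a projection e of S, and let H = {h ∈ S | h·h* = e and h*·h = e}. Then e ∈ H; H is closed under ·, +, the unary operations * and -; for every h ∈ H one has h·e = e·h = h, h·h* = h*·h = e, h + e = e + h = h, and h + (-h) = (-h) + h = e. Hence (H,+,·) is a skew left brace with identity e, in which the multiplicative inverse of h is h* and the additive inverse of h is -h. -/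
/-!
Both `(S,·,⋆)` and `(S,+,-)` are regular ⋆-semigroups, and the brace axioms `(-x)+x = x·x⋆`,
`x+(-x) = x⋆·x` say that `H` is described by the same condition in either structure. So `H`
is the maximal subgroup at `e` of both semigroups at once: the regularity laws make `e` a
two-sided identity and `h⋆`, `-h` inverses. Closure under `·` is where squareness enters:
it gives `(g·h)·(g·h)⋆ = g·g⋆` and `(g·h)⋆·(g·h) = h⋆·h`.
-/

namespace DWLSB

variable {S : Type*} [DWLSB S]

/-- For a projection `e`, the maximal subgroup of `(S,·)` containing `e` (Green's `H`-class). -/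
def maxSubgroup (e : S) : Set S :=
  {h | h * star h = e ∧ star h * h = e}

variable {e g h : S}

theorem mem_maxSubgroup : h ∈ maxSubgroup e ↔ h * star h = e ∧ star h * h = e :=
  Iff.rfl

theorem self_mem_maxSubgroup (hee : e * e = e) (hse : star e = e) : e ∈ maxSubgroup e :=
  ⟨by rw [hse, hee], by rw [hse, hee]⟩

theorem add_neg_of_mem (hh : h ∈ maxSubgroup e) : h + -h = e := by
  rw [add_neg_self', hh.2]

theorem neg_add_of_mem (hh : h ∈ maxSubgroup e) : -h + h = e := by
  rw [neg_add_self', hh.1]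

theorem mul_right_id_of_mem (hh : h ∈ maxSubgroup e) : h * e = h := by
  rw [← hh.2, ← mul_assoc', star_reg]

theorem mul_left_id_of_mem (hh : h ∈ maxSubgroup e) : e * h = h := by
  rw [← hh.1, star_reg]

theorem add_right_id_of_mem (hh : h ∈ maxSubgroup e) : h + e = h := by
  rw [← neg_add_of_mem hh, ← add_assoc', neg_reg]

theorem add_left_id_of_mem (hh : h ∈ maxSubgroup e) : e + h = h := by
  rw [← add_neg_of_mem hh, neg_reg]

theorem star_mem_maxSubgroup (hh : h ∈ maxSubgroup e) : star h ∈ maxSubgroup e := by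
  rw [mem_maxSubgroup, star_star']
  exact hh.symm

theorem neg_mem_maxSubgroup (hh : h ∈ maxSubgroup e) : -h ∈ maxSubgroup e := by
  rw [mem_maxSubgroup, ← neg_add_self', ← add_neg_self', neg_neg']
  exact ⟨add_neg_of_mem hh, neg_add_of_mem hh⟩

theorem add_mem_maxSubgroup (hg : g ∈ maxSubgroup e) (hh : h ∈ maxSubgroup e) :
    g + h ∈ maxSubgroup e := by
  rw [mem_maxSubgroup, ← neg_add_self', ← add_neg_self', neg_add']
  constructor
  · calc -h + -g + (g + h) = -h + (-g + g + h) := by simp only [add_assoc']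
      _ = e := by rw [neg_add_of_mem hg, add_left_id_of_mem hh, neg_add_of_mem hh]
  · calc g + h + (-h + -g) = g + (h + -h + -g) := by simp only [add_assoc']
      _ = e := by
        rw [add_neg_of_mem hh, add_left_id_of_mem (neg_mem_maxSubgroup hg), add_neg_of_mem hg]

end DWLSB

namespace SSLB

open DWLSB

variable {S : Type*} [SSLB S]

theorem mul_mul_star (g h : S) : g * h * star (g * h) = g * star g := by
  rw [DWLSB.star_mul', ← mul_assoc', ← square]

theorem star_mul_mul (g h : S) : star (g * h) * (g * h) = star h * h := by
  simpa only [star_star', DWLSB.star_mul', mul_assoc'] using (square (star h) (star g)).symm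

theorem mul_mem_maxSubgroup {e g h : S} (hg : g ∈ maxSubgroup e) (hh : h ∈ maxSubgroup e) :
    g * h ∈ maxSubgroup e := by
  rw [mem_maxSubgroup, mul_mul_star, star_mul_mul]
  exact ⟨hg.1, hh.2⟩

end SSLB

theorem stmt18 {S : Type*} [SSLB S] (e : S) (he : e * e = e ∧ star e = e) :
    let H : Set S := {h | h * star h = e ∧ star h * h = e}
    e ∈ H ∧
    (∀ g h : S, g ∈ H → h ∈ H → g * h ∈ H) ∧
    (∀ g h : S, g ∈ H → h ∈ H → g + h ∈ H) ∧
    (∀ g : S, g ∈ H → star g ∈ H) ∧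
    (∀ g : S, g ∈ H → -g ∈ H) ∧
    (∀ h : S, h ∈ H →
      h * e = h ∧ e * h = h ∧ h * star h = e ∧ star h * h = e ∧
      h + e = h ∧ e + h = h ∧ h + -h = e ∧ -h + h = e) := by
  intro H
  refine ⟨DWLSB.self_mem_maxSubgroup he.1 he.2, fun _ _ => SSLB.mul_mem_maxSubgroup,
    fun _ _ => DWLSB.add_mem_maxSubgroup, fun _ => DWLSB.star_mem_maxSubgroup,
    fun _ => DWLSB.neg_mem_maxSubgroup, fun h hh => ?_⟩
  exact ⟨DWLSB.mul_right_id_of_mem hh, DWLSB.mul_left_id_of_mem hh, hh.1, hh.2,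
    DWLSB.add_right_id_of_mem hh, DWLSB.add_left_id_of_mem hh, DWLSB.add_neg_of_mem hh,
    DWLSB.neg_add_of_mem hh⟩
end

section
/- Let S be a square skew left brace and fix a projection e of S. Then for every a ∈ S: (e·a·e)·(e·a·e)* = e, (e·a·e)*·(e·a·e) = e (so e·a·e ∈ H = {h ∈ S | h·h* = e and h*·h = e}), and (a·a*)·(e·a·e)·(a*·a) = a. -/
instance (priority := low) DWLSB.toSemigroup {S : Type*} [DWLSB S] : Semigroup S :=
  ⟨DWLSB.mul_assoc'⟩

instance (priority := low) DWLSB.toStarMul {S : Type*} [DWLSB S] : StarMul S where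
  star_involutive := DWLSB.star_star'
  star_mul := DWLSB.star_mul'

section CompletelySimple

variable {S : Type*} [Semigroup S] [StarMul S] {e : S}

theorem IsStarProjection.mul_mul_star_mul_self_s19
    (hsq : ∀ x y : S, x * star x = x * y * star y * star x) (he : IsStarProjection e) (a : S) :
    e * a * star a * e = e := by
  have h := hsq e a
  rw [he.isSelfAdjoint.star_eq, he.isIdempotentElem.eq] at h
  exact h.symm

theorem IsStarProjection.mul_mul_self_mul_star_mul_self
    (hsq : ∀ x y : S, x * star x = x * y * star y * star x) (he : IsStarProjection e) (a : S) :
    e * a * e * star a * e = e := by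
  have h := hsq (e * a) e
  rw [star_mul, he.isSelfAdjoint.star_eq, mul_assoc (e * a) e e, he.isIdempotentElem.eq] at h
  rw [mul_assoc (e * a * e), ← h, ← mul_assoc]
  exact he.mul_mul_star_mul_self_s19 hsq a

theorem IsStarProjection.sandwich_mul_star_sandwich
    (hsq : ∀ x y : S, x * star x = x * y * star y * star x) (he : IsStarProjection e) (a : S) :
    e * a * e * star (e * a * e) = e := by
  rw [star_mul, star_mul, he.isSelfAdjoint.star_eq]
  simp only [← mul_assoc]
  rw [mul_assoc (e * a) e e, he.isIdempotentElem.eq]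
  exact he.mul_mul_self_mul_star_mul_self hsq a

theorem IsStarProjection.star_sandwich_mul_sandwich
    (hsq : ∀ x y : S, x * star x = x * y * star y * star x) (he : IsStarProjection e) (a : S) :
    star (e * a * e) * (e * a * e) = e := by
  simpa [star_mul, he.isSelfAdjoint.star_eq, mul_assoc] using
    he.sandwich_mul_star_sandwich hsq (star a)

theorem IsStarProjection.star_mul_eq_star_mul_mul
    (hsq : ∀ x y : S, x * star x = x * y * star y * star x) (he : IsStarProjection e) (a : S) :
    star a * a = star a * e * a := by
  have h := hsq (star a) e
  rwa [he.isSelfAdjoint.star_eq, star_star, mul_assoc (star a) e e, he.isIdempotentElem.eq] at h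

theorem IsStarProjection.mul_star_mul_sandwich_mul_star_mul
    (hsq : ∀ x y : S, x * star x = x * y * star y * star x) (he : IsStarProjection e) {a : S}
    (ha : a * star a * a = a) :
    a * star a * (e * a * e) * (star a * a) = a := by
  have hfac := he.star_mul_eq_star_mul_mul hsq a
  calc a * star a * (e * a * e) * (star a * a)
      = a * star a * (e * a * e * star a * e) * a := by
        rw [hfac]; simp only [mul_assoc]
    _ = a * (star a * e * a) := by
        rw [he.mul_mul_self_mul_star_mul_self hsq a]; simp only [mul_assoc]
    _ = a := by rw [← hfac, ← mul_assoc, ha]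

end CompletelySimple

theorem stmt19 {S : Type*} [SSLB S] (e : S) (he : e * e = e ∧ star e = e) :
    ∀ a : S,
      (e * a * e) * star (e * a * e) = e ∧
      star (e * a * e) * (e * a * e) = e ∧
      a * star a * (e * a * e) * (star a * a) = a := by
  intro a
  have hproj : IsStarProjection e := ⟨he.1, he.2⟩
  exact ⟨hproj.sandwich_mul_star_sandwich SSLB.square a,
    hproj.star_sandwich_mul_sandwich SSLB.square a,
    hproj.mul_star_mul_sandwich_mul_star_mul SSLB.square (DWLSB.star_reg a)⟩
end
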